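/- Let n = 2m be even and let Φ(e_1), …, Φ(e_n) be the positive-definite (r = 0) spinor matrices of size 2^m, i.e. Φ(e_{2k−1}) = E ⊗ ⋯ ⊗ E ⊗ U ⊗ T^{⊗(k−1)} and Φ(e_{2k}) = E ⊗ ⋯ ⊗ E ⊗ V ⊗ T^{⊗(k−1)} for 1 ≤ k ≤ m. Then for all signs ε_1, …, ε_m ∈ {−1, 1}: (∑_{k=1}^m Φ(e_{2k−1})·Φ(e_{2k})) u(ε_m, …, ε_1) = i·(ε_1 + ⋯ + ε_m)·u(ε_m, …, ε_1). Consequently the matrix ∑_{k=1}^m Φ(e_{2k−1})Φ(e_{2k}) is diagonalizable with eigenvalues i·(m − 2k) for k = 0, 1, …, m, the eigenvalue i·(m−2k) having multiplicity equal to the binomial coefficient C(m,k). -/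
import Mathlib


/-!
STATEMENT 13: For n = 2m and the positive-definite (r = 0) spinor matrices
Φ(e₁), …, Φ(eₙ) of size 2^m (realized on the index set `Fin m → Fin 2`), the
Kähler-form operator Ω = ∑_{k=1}^m Φ(e_{2k−1})·Φ(e_{2k}) satisfies
Ω·u(ε_m,…,ε_1) = i·(ε₁ + ⋯ + ε_m)·u(ε_m,…,ε_1) for all signs ε_t = ±1.
Consequently Ω is diagonalizable with eigenvalues i·(m − 2k), k = 0,…,m, the
eigenvalue i·(m − 2k) having multiplicity C(m,k).
-/

open Matrix

noncomputable def Emat : Matrix (Fin 2) (Fin 2) ℂ := 1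
noncomputable def Tmat : Matrix (Fin 2) (Fin 2) ℂ := !![0, -Complex.I; Complex.I, 0]
noncomputable def Umat : Matrix (Fin 2) (Fin 2) ℂ := !![Complex.I, 0; 0, -Complex.I]
noncomputable def Vmat : Matrix (Fin 2) (Fin 2) ℂ := !![0, Complex.I; Complex.I, 0]

noncomputable def cliffordFactor (k : ℕ) (M : Matrix (Fin 2) (Fin 2) ℂ) (t : ℕ) :
    Matrix (Fin 2) (Fin 2) ℂ :=
  if t < k then Tmat else if t = k then M else Emat

/-- The spinor matrix `Φ(e_{j+1})` for signature `(r, 2m − r)`. -/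
noncomputable def Phi (r m : ℕ) (j : Fin (2 * m)) :
    Matrix (Fin m → Fin 2) (Fin m → Fin 2) ℂ :=
  (if (j : ℕ) + 1 ≤ r then Complex.I else 1) •
    Matrix.of fun p q => ∏ t : Fin m,
      cliffordFactor ((j : ℕ) / 2) (if (j : ℕ) % 2 = 0 then Umat else Vmat)
        (t : ℕ) (p t) (q t)

/-- `u(ε) = (√2/2)·(1, −εi) ∈ ℂ²`. -/
noncomputable def uvec (ε : ℂ) : Fin 2 → ℂ := fun i =>
  ((Real.sqrt 2 / 2 : ℝ) : ℂ) * (if i = 0 then 1 else -ε * Complex.I)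

/-- The basis vector `u(ε_m,…,ε_1) = u(ε_m) ⊗ ⋯ ⊗ u(ε_1)` of `ℂ^{2^m}`. -/
noncomputable def uTensor {m : ℕ} (ε : Fin m → ℂ) : (Fin m → Fin 2) → ℂ :=
  fun p => ∏ t, uvec (ε t) (p t)

/-- The Clifford action `Ω = ∑_{k=1}^m Φ(e_{2k−1})·Φ(e_{2k})` of the Kähler
form (for `r = 0`). -/
noncomputable def OmegaMat (m : ℕ) : Matrix (Fin m → Fin 2) (Fin m → Fin 2) ℂ :=
  ∑ k : Fin m,
    Phi 0 m ⟨2 * (k : ℕ), by have := k.isLt; omega⟩ *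
      Phi 0 m ⟨2 * (k : ℕ) + 1, by have := k.isLt; omega⟩

-- prod/sum interchange
lemma sum_pi_prod {m : ℕ} (f : Fin m → Fin 2 → ℂ) :
    ∑ q : Fin m → Fin 2, ∏ t, f t (q t) = ∏ t, ∑ j, f t j := by
  rw [Finset.prod_univ_sum (fun _ => (Finset.univ : Finset (Fin 2))) f,
    Fintype.piFinset_univ]

lemma tensor_mulVec {m : ℕ} (f : Fin m → Matrix (Fin 2) (Fin 2) ℂ) (v : Fin m → Fin 2 → ℂ) :
    (Matrix.of fun p q : Fin m → Fin 2 => ∏ t, f t (p t) (q t)).mulVec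
      (fun q => ∏ t, v t (q t)) = fun p => ∏ t, (f t).mulVec (v t) (p t) := by
  funext p
  simp only [mulVec, dotProduct, of_apply]
  calc ∑ q : Fin m → Fin 2, (∏ t, f t (p t) (q t)) * ∏ t, v t (q t)
      = ∑ q : Fin m → Fin 2, ∏ t, (f t (p t) (q t) * v t (q t)) :=
        Finset.sum_congr rfl fun q _ => (Finset.prod_mul_distrib).symm
    _ = ∏ t, ∑ j, f t (p t) j * v t j := sum_pi_prod (fun t j => f t (p t) j * v t j)
    _ = _ := rfl

lemma TT : Tmat * Tmat = 1 := by
  ext i j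
  fin_cases i <;> fin_cases j <;>
    simp [Tmat, Matrix.mul_apply, Fin.sum_univ_two, Complex.I_mul_I]

lemma UVW : Umat * Vmat = !![0, -1; (1 : ℂ), 0] := by
  ext i j
  fin_cases i <;> fin_cases j <;>
    simp [Umat, Vmat, Matrix.mul_apply, Fin.sum_univ_two, Complex.I_mul_I]

lemma UV_mulVec (ε : ℂ) (hε : ε = 1 ∨ ε = -1) :
    Umat.mulVec (Vmat.mulVec (uvec ε)) = (Complex.I * ε) • uvec ε := by
  have hε2 : ε * ε = 1 := by rcases hε with h | h <;> subst h <;> ring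
  rw [mulVec_mulVec, UVW]
  funext j
  fin_cases j
  · simp [uvec, mulVec, dotProduct, Fin.sum_univ_two, smul_eq_mul]
    ring
  · simp [uvec, mulVec, dotProduct, Fin.sum_univ_two, smul_eq_mul]
    linear_combination ((Real.sqrt 2 : ℝ) : ℂ) / 2 * ε ^ 2 * Complex.I_sq -
      ((Real.sqrt 2 : ℝ) : ℂ) / 2 * hε2

lemma comp_eval {m : ℕ} (k t : Fin m) (ε : ℂ) (hε : ε = 1 ∨ ε = -1) :
    (cliffordFactor k Umat t).mulVec ((cliffordFactor k Vmat t).mulVec (uvec ε)) =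
      (if (t : ℕ) = (k : ℕ) then Complex.I * ε else 1) • uvec ε := by
  unfold cliffordFactor
  rcases lt_trichotomy (t : ℕ) (k : ℕ) with h | h | h
  · simp only [if_pos h, if_neg (show ¬(t : ℕ) = (k : ℕ) by omega)]
    rw [mulVec_mulVec, TT, one_mulVec, one_smul]
  · simp only [if_neg (show ¬(t : ℕ) < (k : ℕ) by omega), if_pos h]
    exact UV_mulVec ε hε
  · simp only [if_neg (show ¬(t : ℕ) < (k : ℕ) by omega),
      if_neg (show ¬(t : ℕ) = (k : ℕ) by omega)]
    show Emat.mulVec (Emat.mulVec (uvec ε)) = _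
    simp [Emat]

lemma Phi_even (m : ℕ) (k : Fin m) (h1 : 2 * (k : ℕ) < 2 * m) :
    Phi 0 m ⟨2 * (k : ℕ), h1⟩ =
      Matrix.of fun p q : Fin m → Fin 2 =>
        ∏ t : Fin m, cliffordFactor (k : ℕ) Umat (t : ℕ) (p t) (q t) := by
  have hd : 2 * (k : ℕ) / 2 = (k : ℕ) := by omega
  have hm : 2 * (k : ℕ) % 2 = 0 := by omega
  simp [Phi, hd, hm]

lemma Phi_odd (m : ℕ) (k : Fin m) (h1 : 2 * (k : ℕ) + 1 < 2 * m) :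
    Phi 0 m ⟨2 * (k : ℕ) + 1, h1⟩ =
      Matrix.of fun p q : Fin m → Fin 2 =>
        ∏ t : Fin m, cliffordFactor (k : ℕ) Vmat (t : ℕ) (p t) (q t) := by
  have hd : (2 * (k : ℕ) + 1) / 2 = (k : ℕ) := by omega
  have hm : (2 * (k : ℕ) + 1) % 2 = 1 := by omega
  simp [Phi, hd, hm]

lemma term_mulVec {m : ℕ} (ε : Fin m → ℂ) (hε : ∀ t, ε t = 1 ∨ ε t = -1) (k : Fin m)
    (h1 : 2 * (k : ℕ) < 2 * m) (h2 : 2 * (k : ℕ) + 1 < 2 * m) :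
    (Phi 0 m ⟨2 * (k : ℕ), h1⟩ * Phi 0 m ⟨2 * (k : ℕ) + 1, h2⟩).mulVec (uTensor ε) =
      (Complex.I * ε k) • uTensor ε := by
  rw [← mulVec_mulVec, Phi_even, Phi_odd]
  have e1 : (Matrix.of fun p q : Fin m → Fin 2 =>
        ∏ t : Fin m, cliffordFactor (k : ℕ) Vmat (t : ℕ) (p t) (q t)).mulVec (uTensor ε) =
      fun p : Fin m → Fin 2 => ∏ t : Fin m, (cliffordFactor (k : ℕ) Vmat (t : ℕ)).mulVec (uvec (ε t)) (p t) :=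
    tensor_mulVec (fun t : Fin m => cliffordFactor (k : ℕ) Vmat (t : ℕ)) (fun t => uvec (ε t))
  have e2 : (Matrix.of fun p q : Fin m → Fin 2 =>
        ∏ t : Fin m, cliffordFactor (k : ℕ) Umat (t : ℕ) (p t) (q t)).mulVec
        (fun p : Fin m → Fin 2 => ∏ t : Fin m, (cliffordFactor (k : ℕ) Vmat (t : ℕ)).mulVec (uvec (ε t)) (p t)) =
      fun p : Fin m → Fin 2 => ∏ t : Fin m, (cliffordFactor (k : ℕ) Umat (t : ℕ)).mulVec
        ((cliffordFactor (k : ℕ) Vmat (t : ℕ)).mulVec (uvec (ε t))) (p t) :=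
    tensor_mulVec (fun t : Fin m => cliffordFactor (k : ℕ) Umat (t : ℕ))
      (fun t => (cliffordFactor (k : ℕ) Vmat (t : ℕ)).mulVec (uvec (ε t)))
  rw [e1, e2]
  funext p
  have e3 : ∀ t : Fin m, (cliffordFactor (k : ℕ) Umat (t : ℕ)).mulVec
      ((cliffordFactor (k : ℕ) Vmat (t : ℕ)).mulVec (uvec (ε t))) (p t) =
      (if (t : ℕ) = (k : ℕ) then Complex.I * ε t else 1) * uvec (ε t) (p t) := by
    intro t
    rw [comp_eval k t (ε t) (hε t)]
    simp
  rw [Finset.prod_congr rfl fun t _ => e3 t, Finset.prod_mul_distrib]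
  have e4 : (∏ t : Fin m, if (t : ℕ) = (k : ℕ) then Complex.I * ε t else 1)
      = Complex.I * ε k := by
    have hiff : ∀ t : Fin m, ((t : ℕ) = (k : ℕ)) = (t = k) := by
      intro t
      simp [Fin.val_inj]
    simp_rw [hiff]
    simp
  rw [e4]
  rfl

lemma Omega_mulVec {m : ℕ} (ε : Fin m → ℂ) (hε : ∀ t, ε t = 1 ∨ ε t = -1) :
    (OmegaMat m).mulVec (uTensor ε) = (Complex.I * ∑ t, ε t) • uTensor ε := by
  unfold OmegaMat
  have hsplit : (∑ k : Fin m,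
        Phi 0 m ⟨2 * (k : ℕ), by have := k.isLt; omega⟩ *
          Phi 0 m ⟨2 * (k : ℕ) + 1, by have := k.isLt; omega⟩).mulVec (uTensor ε) =
      ∑ k : Fin m, (Phi 0 m ⟨2 * (k : ℕ), by have := k.isLt; omega⟩ *
          Phi 0 m ⟨2 * (k : ℕ) + 1, by have := k.isLt; omega⟩).mulVec (uTensor ε) := by
    funext p
    simp only [mulVec, dotProduct, Matrix.sum_apply, Finset.sum_apply, Finset.sum_mul]
    rw [Finset.sum_comm]
  rw [hsplit]
  have : ∀ k : Fin m, (Phi 0 m ⟨2 * (k : ℕ), by have := k.isLt; omega⟩ *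
      Phi 0 m ⟨2 * (k : ℕ) + 1, by have := k.isLt; omega⟩).mulVec (uTensor ε) =
      (Complex.I * ε k) • uTensor ε := fun k => term_mulVec ε hε k _ _
  rw [Finset.sum_congr rfl fun k _ => this k, ← Finset.sum_smul, ← Finset.mul_sum]

-- sign vectors
def sgnv {m : ℕ} (σ : Fin m → Bool) : Fin m → ℂ := fun t => if σ t then -1 else 1

noncomputable def bvec {m : ℕ} (σ : Fin m → Bool) : (Fin m → Fin 2) → ℂ := uTensor (sgnv σ)

def cnt {m : ℕ} (σ : Fin m → Bool) : ℕ := (Finset.univ.filter fun t => σ t = true).card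

lemma sgnv_pm {m : ℕ} (σ : Fin m → Bool) (t : Fin m) : sgnv σ t = 1 ∨ sgnv σ t = -1 := by
  unfold sgnv; by_cases h : σ t <;> simp [h]

lemma cnt_le {m : ℕ} (σ : Fin m → Bool) : cnt σ ≤ m :=
  le_trans (Finset.card_filter_le _ _) (by simp)

lemma sum_sgnv {m : ℕ} (σ : Fin m → Bool) :
    ∑ t, sgnv σ t = (m : ℂ) - 2 * (cnt σ : ℂ) := by
  unfold sgnv cnt
  have : ∀ t : Fin m, (if σ t then (-1 : ℂ) else 1) =
      1 - 2 * (if σ t = true then (1 : ℂ) else 0) := by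
    intro t; by_cases h : σ t <;> simp [h] <;> ring
  rw [Finset.sum_congr rfl fun t _ => this t, Finset.sum_sub_distrib]
  rw [← Finset.mul_sum, Finset.sum_boole]
  simp [Finset.sum_const]

lemma uvec_pair (a b : Bool) :
    ∑ j : Fin 2, (starRingEnd ℂ) (uvec (if a then -1 else 1) j) *
      uvec (if b then -1 else 1) j = if a = b then 1 else 0 := by
  cases a <;> cases b <;>
    simp [uvec, Fin.sum_univ_two, _root_.map_mul, Complex.conj_ofReal, Complex.conj_I] <;>
    ring_nf
  all_goals
    simp only [map_ofNat, Complex.I_sq]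
    rw [show ((Real.sqrt 2 : ℝ) : ℂ) ^ 2 = 2 by
      rw [← Complex.ofReal_pow, Real.sq_sqrt (by norm_num : (0:ℝ) ≤ 2)]; norm_num]
    norm_num

lemma bvec_pair {m : ℕ} (τ σ : Fin m → Bool) :
    ∑ p : Fin m → Fin 2, (starRingEnd ℂ) (bvec τ p) * bvec σ p =
      if τ = σ then 1 else 0 := by
  unfold bvec uTensor
  calc ∑ p : Fin m → Fin 2,
        (starRingEnd ℂ) (∏ t, uvec (sgnv τ t) (p t)) * ∏ t, uvec (sgnv σ t) (p t)
      = ∑ p : Fin m → Fin 2,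
          ∏ t, ((starRingEnd ℂ) (uvec (sgnv τ t) (p t)) * uvec (sgnv σ t) (p t)) := by
        refine Finset.sum_congr rfl fun p _ => ?_
        rw [map_prod, ← Finset.prod_mul_distrib]
    _ = ∏ t, ∑ j, (starRingEnd ℂ) (uvec (sgnv τ t) j) * uvec (sgnv σ t) j :=
        sum_pi_prod (fun t j => (starRingEnd ℂ) (uvec (sgnv τ t) j) * uvec (sgnv σ t) j)
    _ = ∏ t, (if τ t = σ t then (1 : ℂ) else 0) :=
        Finset.prod_congr rfl fun t _ => uvec_pair (τ t) (σ t)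
    _ = if τ = σ then 1 else 0 := by
        by_cases h : τ = σ
        · simp [h]
        · rw [if_neg h]
          obtain ⟨t, ht⟩ := Function.ne_iff.mp h
          exact Finset.prod_eq_zero (Finset.mem_univ t) (if_neg ht)

lemma bvec_li (m : ℕ) : LinearIndependent ℂ (bvec (m := m)) := by
  rw [Fintype.linearIndependent_iff]
  intro g hg τ
  have hp : ∀ p, ∑ σ, g σ * bvec σ p = 0 := by
    intro p
    have := congrFun hg p
    simpa [Finset.sum_apply] using this
  have key : ∑ σ, g σ * (if τ = σ then (1 : ℂ) else 0) = 0 := by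
    calc ∑ σ, g σ * (if τ = σ then (1 : ℂ) else 0)
        = ∑ σ, g σ * ∑ p, (starRingEnd ℂ) (bvec τ p) * bvec σ p := by
          simp_rw [bvec_pair]
      _ = ∑ σ, ∑ p, (starRingEnd ℂ) (bvec τ p) * (g σ * bvec σ p) := by
          refine Finset.sum_congr rfl fun σ _ => ?_
          rw [Finset.mul_sum]
          exact Finset.sum_congr rfl fun p _ => by ring
      _ = ∑ p, ∑ σ, (starRingEnd ℂ) (bvec τ p) * (g σ * bvec σ p) := Finset.sum_comm
      _ = ∑ p : Fin m → Fin 2, (starRingEnd ℂ) (bvec τ p) * ∑ σ, g σ * bvec σ p := by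
          exact Finset.sum_congr rfl fun p _ => (Finset.mul_sum _ _ _).symm
      _ = 0 := by simp [hp]
  simpa using key

noncomputable def cntEquiv (m k : ℕ) :
    {σ : Fin m → Bool // cnt σ = k} ≃ {s : Finset (Fin m) // s.card = k} where
  toFun σ := ⟨Finset.univ.filter fun t => σ.1 t = true, σ.2⟩
  invFun s := ⟨fun t => decide (t ∈ s.1), by simp [cnt]; exact s.2⟩
  left_inv σ := by
    apply Subtype.ext
    funext t
    simp
  right_inv s := by
    apply Subtype.ext
    ext t
    simp

lemma card_sign (m k : ℕ) :
    Fintype.card {σ : Fin m → Bool // cnt σ = k} = m.choose k := by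
  rw [Fintype.card_congr (cntEquiv m k), Fintype.card_finset_len, Fintype.card_fin]

lemma finrank_target (m : ℕ) :
    Module.finrank ℂ ((Fin m → Fin 2) → ℂ) = 2 ^ m := by
  rw [Module.finrank_pi]
  simp [Fintype.card_fun]

lemma bvec_mem {m : ℕ} (σ : Fin m → Bool) :
    bvec σ ∈ Module.End.eigenspace ((OmegaMat m).mulVecLin)
      (Complex.I * ((m : ℂ) - 2 * ((cnt σ : ℕ) : ℂ))) := by
  rw [Module.End.mem_eigenspace_iff, Matrix.mulVecLin_apply]
  unfold bvec
  rw [Omega_mulVec (sgnv σ) (sgnv_pm σ), sum_sgnv]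

noncomputable def Vsp (m : ℕ) (k : Fin (m + 1)) : Submodule ℂ ((Fin m → Fin 2) → ℂ) :=
  Module.End.eigenspace ((OmegaMat m).mulVecLin)
    (Complex.I * ((m : ℂ) - 2 * ((k : ℕ) : ℂ)))

lemma bvec_mem' {m : ℕ} (σ : Fin m → Bool) :
    bvec σ ∈ Vsp m ⟨cnt σ, Nat.lt_succ_of_le (cnt_le σ)⟩ :=
  bvec_mem σ

lemma hspan (m : ℕ) : Submodule.span ℂ (Set.range (bvec (m := m))) = ⊤ := by
  have hcard : Fintype.card (Fin m → Bool) =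
      Module.finrank ℂ ((Fin m → Fin 2) → ℂ) := by
    rw [finrank_target]
    simp [Fintype.card_fun]
  simpa [coe_basisOfLinearIndependentOfCardEqFinrank] using
    (basisOfLinearIndependentOfCardEqFinrank (bvec_li m) hcard).span_eq

lemma hsup (m : ℕ) : ⨆ k, Vsp m k = ⊤ := by
  rw [eq_top_iff, ← hspan m]
  refine Submodule.span_le.mpr ?_
  rintro x ⟨σ, rfl⟩
  exact Submodule.mem_iSup_of_mem _ (bvec_mem' σ)

lemma hinj (m : ℕ) :
    Function.Injective fun k : Fin (m + 1) =>
      Complex.I * ((m : ℂ) - 2 * ((k : ℕ) : ℂ)) := by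
  intro a b hab
  simp only at hab
  have h1 := mul_left_cancel₀ Complex.I_ne_zero hab
  have h2 := sub_right_inj.mp h1
  have h3 := mul_left_cancel₀ (two_ne_zero (α := ℂ)) h2
  exact Fin.ext (Nat.cast_injective h3)

lemma hind (m : ℕ) : iSupIndep (Vsp m) :=
  (Module.End.eigenspaces_iSupIndep ((OmegaMat m).mulVecLin)).comp (hinj m)

lemma hsum (m : ℕ) : ∑ k, Module.finrank ℂ (Vsp m k) = 2 ^ m := by
  classical
  have hInt : DirectSum.IsInternal (Vsp m) :=
    DirectSum.isInternal_submodule_of_iSupIndep_of_iSup_eq_top (hind m) (hsup m)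
  have hb := Module.finrank_eq_card_basis
    (hInt.collectedBasis fun k => Module.finBasis ℂ (Vsp m k))
  rw [finrank_target] at hb
  rw [hb]
  simp

lemma hlow (m : ℕ) (k : Fin (m + 1)) :
    m.choose k ≤ Module.finrank ℂ (Vsp m k) := by
  have hli0 : LinearIndependent ℂ
      (fun σ : {σ : Fin m → Bool // cnt σ = (k : ℕ)} => bvec σ.1) :=
    (bvec_li m).comp Subtype.val Subtype.val_injective
  have hli : LinearIndependent ℂ
      (fun σ : {σ : Fin m → Bool // cnt σ = (k : ℕ)} =>
        (⟨bvec σ.1, by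
          have h := bvec_mem σ.1
          rw [σ.2] at h
          exact h⟩ : Vsp m k)) := by
    apply LinearIndependent.of_comp (Vsp m k).subtype
    exact hli0
  calc m.choose k = Fintype.card {σ : Fin m → Bool // cnt σ = (k : ℕ)} :=
        (card_sign m k).symm
    _ ≤ Module.finrank ℂ (Vsp m k) := hli.fintype_card_le_finrank

lemma hdim (m : ℕ) (k : Fin (m + 1)) :
    Module.finrank ℂ (Vsp m k) = m.choose k := by
  have hs : ∑ k : Fin (m + 1), m.choose (k : ℕ) = ∑ k, Module.finrank ℂ (Vsp m k) := by
    rw [hsum m, Fin.sum_univ_eq_sum_range, Nat.sum_range_choose]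
  exact ((Finset.sum_eq_sum_iff_of_le fun i _ => hlow m i).mp hs k
    (Finset.mem_univ k)).symm

theorem Omega_eigen (m : ℕ) :
    -- Ω·u(ε_m,…,ε_1) = i·(ε₁ + ⋯ + ε_m)·u(ε_m,…,ε_1)
    (∀ ε : Fin m → ℂ, (∀ t, ε t = 1 ∨ ε t = -1) →
      (OmegaMat m).mulVec (uTensor ε) = (Complex.I * ∑ t, ε t) • uTensor ε) ∧
    -- Ω is diagonalizable with eigenvalues i·(m − 2k), k = 0, …, m, …
    (⨆ k : Fin (m + 1),
      Module.End.eigenspace ((OmegaMat m).mulVecLin)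
        (Complex.I * ((m : ℂ) - 2 * ((k : ℕ) : ℂ))) = ⊤) ∧
    -- … each eigenvalue i·(m − 2k) having multiplicity C(m,k)
    (∀ k : Fin (m + 1),
      Module.finrank ℂ
        (Module.End.eigenspace ((OmegaMat m).mulVecLin)
          (Complex.I * ((m : ℂ) - 2 * ((k : ℕ) : ℂ)))) = m.choose k) := by
  exact ⟨fun ε hε => Omega_mulVec ε hε, hsup m, fun k => hdim m k⟩
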